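/- arXiv:1101.1311 — 4 statements merged into one kernel-verified Lean document; each statement's English description precedes it below -/
import Mathlib

section
/- Let a, b, n be natural numbers with a ≥ 1, b ≥ 1 and a + b ≤ n − 1. Then, as real numbers, p(n−b,a)·p(n,b) − p(n,a+b)·p(a+b,b) + phat(n,a,b) = (4·a!·b!·(n−a−b)!/(n−1)!)·G(n,a,b), where G(n,a,b) := n/(a·b·(a+1)·(b+1)) − (a(a+1)+b(b+1)+ab)/(a·b·(a+1)·(b+1)·(a+b+1)) + 1/((a+b)·((a+b)²−1)). (This is the identity establishing the formula r_n(a,b) for the joint probability that two disjoint, non-exhaustive sets of sizes a and b are both clades under the Yule–Harding–Kingman model.) -/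
/-!
Since `n * (n - 1)! = n!`, the clade probability has the closed form
`p n a = 2 a! (n - a)! / (a (a + 1) (n - 1)!)`. In it, each of the three terms on the left becomes
the common factor `4 a! b! (n - a - b)! / (n - 1)!` times a rational function of `a`, `b`, `n`,
and what remains is an identity of rational functions.
-/

open Nat

/-- `p n a` : probability that a fixed `a`-element subset of an `n`-set is a clade
of a YHK tree (for `1 ≤ a ≤ n - 1`). -/
noncomputable def p (n a : ℕ) : ℝ :=
  (2 * (n : ℝ) / ((a : ℝ) * ((a : ℝ) + 1))) * ((n.choose a : ℝ))⁻¹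

/-- `phat n a b` : probability that two fixed disjoint subsets of sizes `a` and `b`
are sister clades of a YHK tree on `n` leaves. -/
noncomputable def phat (n a b : ℕ) : ℝ :=
  4 * (a ! : ℝ) * (b ! : ℝ) * ((n - a - b)! : ℝ) /
    (((n - 1)! : ℝ) * (((a : ℝ) + (b : ℝ)) * (((a : ℝ) + (b : ℝ)) ^ 2 - 1)))

/-- The quantity `G_n(a,b)` from Theorem 5 (Case 5). -/
noncomputable def G (n a b : ℕ) : ℝ :=
  (n : ℝ) / ((a : ℝ) * (b : ℝ) * ((a : ℝ) + 1) * ((b : ℝ) + 1)) -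
    ((a : ℝ) * ((a : ℝ) + 1) + (b : ℝ) * ((b : ℝ) + 1) + (a : ℝ) * (b : ℝ)) /
      ((a : ℝ) * (b : ℝ) * ((a : ℝ) + 1) * ((b : ℝ) + 1) * ((a : ℝ) + (b : ℝ) + 1)) +
    1 / (((a : ℝ) + (b : ℝ)) * (((a : ℝ) + (b : ℝ)) ^ 2 - 1))

theorem p_eq_factorial {n a : ℕ} (h : a ≤ n) :
    p n a = 2 * a ! * (n - a)! / (a * (a + 1) * (n - 1)!) := by
  rcases Nat.eq_zero_or_pos n with rfl | hn
  · obtain rfl : a = 0 := by omega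
    simp [p]
  have hfact : (n ! : ℝ) = n * (n - 1)! := by exact_mod_cast (Nat.mul_factorial_pred hn.ne').symm
  rw [p, Nat.cast_choose ℝ h, inv_div, hfact]
  field_simp

theorem p_sub_mul_p {n a b : ℕ} (ha : 1 ≤ a) (h : a + b ≤ n) :
    p (n - b) a * p n b =
      4 * a ! * b ! * (n - a - b)! / (n - 1)! *
        (((n : ℝ) - b) / (a * (a + 1) * b * (b + 1))) := by
  have hpred : ((n - b : ℕ) : ℝ) * (n - b - 1)! = (n - b)! := by
    exact_mod_cast Nat.mul_factorial_pred (by omega)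
  rw [p_eq_factorial (by omega), p_eq_factorial (by omega), ← hpred, Nat.sub_right_comm n b a,
    Nat.cast_sub (by omega : b ≤ n)]
  field_simp
  ring

theorem p_mul_p_add {n a b : ℕ} (ha : 1 ≤ a) (h : a + b ≤ n) :
    p n (a + b) * p (a + b) b =
      4 * a ! * b ! * (n - a - b)! / (n - 1)! * (1 / ((a + b + 1) * b * (b + 1))) := by
  have hpred : ((a + b : ℕ) : ℝ) * (a + b - 1)! = (a + b)! := by
    exact_mod_cast Nat.mul_factorial_pred (by omega)
  rw [p_eq_factorial h, p_eq_factorial (by omega), ← hpred, Nat.add_sub_cancel, Nat.sub_add_eq]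
  push_cast
  field_simp
  ring

theorem phat_eq_mul (n a b : ℕ) :
    phat n a b = 4 * a ! * b ! * (n - a - b)! / (n - 1)! *
      (1 / ((a + b) * ((a + b) ^ 2 - 1))) := by
  rw [phat, mul_one_div, div_div]

theorem G_eq {n a b : ℕ} (ha : a ≠ 0) (hb : b ≠ 0) :
    G n a b = ((n : ℝ) - b) / (a * (a + 1) * b * (b + 1)) - 1 / ((a + b + 1) * b * (b + 1)) +
      1 / ((a + b) * ((a + b) ^ 2 - 1)) := by
  rw [G]
  field_simp
  ring

/-- The identity establishing the formula `r_n(a,b)` for the joint probability that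
two disjoint, non-exhaustive sets of sizes `a` and `b` are both clades under the
YHK model. -/
theorem disjoint_clades_identity (a b n : ℕ) (ha : 1 ≤ a) (hb : 1 ≤ b)
    (hab : a + b ≤ n - 1) :
    p (n - b) a * p n b - p n (a + b) * p (a + b) b + phat n a b =
      (4 * (a ! : ℝ) * (b ! : ℝ) * ((n - a - b)! : ℝ) / ((n - 1)! : ℝ)) * G n a b := by
  rw [p_sub_mul_p ha (by omega), p_mul_p_add ha (by omega), phat_eq_mul,
    G_eq (by omega) (by omega)]
  ring
end

section
/- Let a, n be natural numbers with 2 ≤ a ≤ n−2. Then (2/(n−1))·(choose(n,a))⁻¹ > p(n,a)·p(n,n−a). (This shows that under the Yule–Harding–Kingman model, for disjoint exhaustive sets A and X−A each of size at least 2, the events that A and X−A are clades are positively correlated.) -/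
lemma choose_mono_le_half (n r : ℕ) : ∀ s, s ≤ n / 2 → r ≤ s → n.choose r ≤ n.choose s := by
  intro s
  induction s with
  | zero => intro _ hr; simp [Nat.le_zero.mp hr]
  | succ s ih =>
    intro hs hr
    rcases Nat.lt_or_ge r (s+1) with h | h
    · exact (ih (by omega) (by omega)).trans
        (Nat.choose_le_succ_of_lt_half_left (by omega))
    · have : r = s + 1 := by omega
      simp [this]

lemma n_le_choose (n a : ℕ) (h1 : 1 ≤ a) (h2 : a ≤ n - 1) (hn : 2 ≤ n) :
    n ≤ n.choose a := by
  rcases le_or_gt a (n / 2) with h | h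
  · have := choose_mono_le_half n 1 a h h1
    simpa [Nat.choose_one_right] using this
  · have hsym : n.choose (n - a) = n.choose a := Nat.choose_symm (by omega)
    have := choose_mono_le_half n 1 (n - a) (by omega) (by omega)
    rw [hsym] at this
    simpa [Nat.choose_one_right] using this

/-- Under the YHK model, for complementary sets `A` and `X - A` of sizes `a` and
`n - a`, each of size at least 2, the events that `A` and `X - A` are clades are
positively correlated: `phat_n(a, n-a) > p_n(a) p_n(n-a)`. -/
theorem complementary_clades_positive_correlation (a n : ℕ) (ha : 2 ≤ a)
    (han : a ≤ n - 2) :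
    (2 / ((n : ℝ) - 1)) * ((n.choose a : ℝ))⁻¹ > p n a * p n (n - a) := by
  have hn4 : 4 ≤ n := by omega
  have han' : a + 2 ≤ n := by omega
  have hsym : n.choose (n - a) = n.choose a := Nat.choose_symm (by omega)
  have hCn : (n : ℝ) ≤ (n.choose a : ℝ) := by
    exact_mod_cast n_le_choose n a (by omega) (by omega) (by omega)
  unfold p
  rw [hsym]
  have hcast : ((n - a : ℕ) : ℝ) = (n : ℝ) - a := by
    push_cast [Nat.cast_sub (by omega : a ≤ n)]; ring
  rw [hcast]
  set N := (n : ℝ) with hN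
  set A := (a : ℝ) with hA
  set C := (n.choose a : ℝ) with hC
  clear_value N A C
  have hA2 : 2 ≤ A := by rw [hA]; exact_mod_cast ha
  have hNA : A + 2 ≤ N := by rw [hA, hN]; exact_mod_cast han'
  have hN4' : (4 : ℝ) ≤ N := by rw [hN]; exact_mod_cast hn4
  clear hsym han' hn4 han ha hcast hN hA hC
  have hCpos : 0 < C := by linarith
  have hApos : 0 < A := by linarith
  have hBpos : 0 < N - A := by linarith
  have hu : 2 * (N - 2) ≤ A * (N - A) := by nlinarith [mul_nonneg (by linarith : (0:ℝ) ≤ A - 2) (by linarith : (0:ℝ) ≤ N - A - 2)]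
  have hP : 6 * (N - 2) * (N - 1) ≤ A * (A + 1) * ((N - A) * ((N - A) + 1)) := by
    nlinarith [hu, mul_nonneg (by nlinarith : (0:ℝ) ≤ A * (N - A) - 2 * (N - 2)) (by nlinarith : (0:ℝ) ≤ A * (N - A))]
  have hPC : 6 * (N - 2) * (N - 1) * N ≤ A * (A + 1) * ((N - A) * ((N - A) + 1)) * C :=
    mul_le_mul hP hCn (by linarith) (by nlinarith)
  have hC0 : C ≠ 0 := ne_of_gt hCpos
  have hA0 : A ≠ 0 := ne_of_gt hApos
  have hA1 : A + 1 ≠ 0 := by positivity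
  have hB0 : N - A ≠ 0 := ne_of_gt hBpos
  have hB1 : N - A + 1 ≠ 0 := by positivity
  have hN1 : N - 1 ≠ 0 := by intro h; nlinarith
  have e1 : 2 * N / (A * (A + 1)) * C⁻¹ * (2 * N / ((N - A) * ((N - A) + 1)) * C⁻¹)
      = 4 * N * N / (A * (A + 1) * ((N - A) * ((N - A) + 1)) * (C * C)) := by
    field_simp
    ring
  have e2 : 2 / (N - 1) * C⁻¹ = 2 / ((N - 1) * C) := by
    field_simp
  have hN1pos : (0:ℝ) < N - 1 := by linarith
  have hPpos : (0:ℝ) < A * (A + 1) * ((N - A) * ((N - A) + 1)) * (C * C) := by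
    have h1 : (0:ℝ) < A * (A + 1) := mul_pos hApos (by linarith)
    have h2 : (0:ℝ) < (N - A) * ((N - A) + 1) := mul_pos hBpos (by linarith)
    exact mul_pos (mul_pos h1 h2) (mul_pos hCpos hCpos)
  rw [gt_iff_lt, e1, e2, div_lt_div_iff₀ hPpos (mul_pos hN1pos hCpos)]
  have h1 := mul_le_mul_of_nonneg_right hPC (by linarith : (0:ℝ) ≤ 2 * C)
  have h2 : 4 * N * N * ((N - 1) * C) + (N - 1) * C * N * (2 * N - 6) * 4
      = 6 * (N - 2) * (N - 1) * N * (2 * C) := by ring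
  have h3 : A * (A + 1) * ((N - A) * ((N - A) + 1)) * C * (2 * C)
      = 2 * (A * (A + 1) * ((N - A) * ((N - A) + 1)) * (C * C)) := by ring
  have h4 : (0:ℝ) < (N - 1) * C * N * (2 * N - 6) :=
    mul_pos (mul_pos (mul_pos hN1pos hCpos) (by linarith)) (by linarith)
  linarith [h1, h2, h3, h4]
end

section
/- Let a, n be natural numbers with 1 ≤ a ≤ n−1, and set b = n−a. Then, as real numbers, p(n,a) + p(n,b) − (2/(n−1))·(choose(n,a))⁻¹ = 2n·(1/(a(a+1)) + 1/(b(b+1)) − 1/((n−1)·n))·(choose(n,a))⁻¹. (This is the identity establishing the formula for the probability q_n(a) that a fixed a-element subset is a clan of an unrooted Yule–Harding–Kingman tree.) -/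
theorem p_sub {n a : ℕ} (h : a ≤ n) :
    p n (n - a) = 2 * (n : ℝ) / (((n - a : ℕ) : ℝ) * ((n - a : ℕ) + 1)) * (n.choose a : ℝ)⁻¹ := by
  rw [p, Nat.choose_symm h]

theorem two_div_sub_one_eq_mul_one_div {K : Type*} [Field K] {x : K} (hx : x ≠ 0) :
    2 / (x - 1) = 2 * x * (1 / ((x - 1) * x)) := by
  rw [mul_one_div, mul_comm 2 x, mul_comm (x - 1), mul_div_mul_left _ _ hx]

/-- The identity establishing the formula for the probability `q_n(a)` that a fixed
`a`-element subset is a clan of an unrooted YHK tree: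
`p_n(a) + p_n(n-a) - phat_n(a, n-a) = q_n(a)`. -/
theorem clan_probability_identity (a b n : ℕ) (ha : 1 ≤ a) (han : a ≤ n - 1)
    (hb : b = n - a) :
    p n a + p n b - (2 / ((n : ℝ) - 1)) * ((n.choose a : ℝ))⁻¹ =
      2 * (n : ℝ) * (1 / ((a : ℝ) * ((a : ℝ) + 1)) + 1 / ((b : ℝ) * ((b : ℝ) + 1)) -
        1 / (((n : ℝ) - 1) * (n : ℝ))) * ((n.choose a : ℝ))⁻¹ := by
  subst hb
  have hn : (n : ℝ) ≠ 0 := by exact_mod_cast (by omega : n ≠ 0)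
  rw [p, p_sub (by omega), two_div_sub_one_eq_mul_one_div hn]
  ring
end

section
/- Let T be a rooted binary tree with N leaves, let A be a subset of {1,…,N} of size a, let m ≥ 1 be a natural number, and let the leaves of T be labeled by a uniformly random bijection from the leaf positions of T to {1,…,N}. Then the expected number of vertices of T whose descendant leaves number exactly m and all receive labels in A is at most choose(a,m)/choose(N−1,m−1). -/
/-!
By linearity of expectation the sum counts, for each vertex `v` with exactly `m` descendant
leaves, the permutations mapping those `m` leaves into the `a` labels of `A`; there are
`a.descFactorial m * (N - m)!` of them, so `v` contributes `choose a m / choose N m`.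
Vertices with exactly `m` descendant leaves have pairwise disjoint leaf sets, so there are at
most `N / m` of them, and `(N / m) * choose a m / choose N m = choose a m / choose (N-1) (m-1)`.
-/

inductive RBT : Type
  | leaf : RBT
  | node : RBT → RBT → RBT

namespace RBT

def numLeaves : RBT → ℕ
  | leaf => 1
  | node l r => l.numLeaves + r.numLeaves

def leafPaths : RBT → List (List Bool)
  | leaf => [[]]
  | node l r => (l.leafPaths.map (false :: ·)) ++ (r.leafPaths.map (true :: ·))

def vertexPaths : RBT → List (List Bool)
  | leaf => [[]]
  | node l r => [] :: ((l.vertexPaths.map (false :: ·)) ++ (r.vertexPaths.map (true :: ·)))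

def descLeaves (t : RBT) (p : List Bool) : List (List Bool) :=
  t.leafPaths.filter (fun q => p.isPrefixOf q)

theorem length_leafPaths : ∀ t : RBT, t.leafPaths.length = t.numLeaves
  | leaf => rfl
  | node l r => by
    simp [leafPaths, numLeaves, length_leafPaths l, length_leafPaths r]

end RBT

open Finset Nat

namespace Equiv.Perm

variable {α ι : Type*} [Fintype α] [DecidableEq α] [Fintype ι]

theorem card_smul_embedding_eq (x y : ι ↪ α) :
    #{σ : Perm α | σ • x = y} = #{σ : Perm α | σ • x = x} := by
  obtain ⟨g, rfl⟩ := exists_smul_eq_embedding x y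
  refine card_equiv (Equiv.mulLeft g⁻¹) fun σ => ?_
  simp [mul_smul, inv_smul_eq_iff]

theorem card_smul_embedding_mem [DecidableEq ι] (x : ι ↪ α) (E : Finset (ι ↪ α)) :
    #{σ : Perm α | σ • x ∈ E} = #E * #{σ : Perm α | σ • x = x} := by
  rw [card_eq_sum_card_fiberwise (s := {σ : Perm α | σ • x ∈ E}) (f := (· • x)) (t := E)
    fun σ hσ => (mem_filter.1 hσ).2, ← smul_eq_mul, ← sum_const]
  refine sum_congr rfl fun y hy => ?_
  rw [← card_smul_embedding_eq x y, filter_filter]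
  congr 1
  ext σ
  simp only [mem_filter, mem_univ, true_and]
  exact ⟨And.right, fun h => ⟨h ▸ hy, h⟩⟩

/-- All fibres of `σ ↦ σ • x` have the size of the stabiliser of `x`; the case `E = univ` of
`card_smul_embedding_mem` shows that this size is `(card α - #S)!`. -/
theorem card_mapsTo (S B : Finset α) :
    #{σ : Perm α | ∀ i ∈ S, σ i ∈ B} = (#B).descFactorial #S * (Fintype.card α - #S)! := by
  set x : S ↪ α := Function.Embedding.subtype _
  have hfix : #{σ : Perm α | σ • x = x} = (Fintype.card α - #S)! := by
    have h := card_smul_embedding_mem x univ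
    simp only [mem_univ, filter_true, Finset.card_univ, Fintype.card_perm,
      Fintype.card_embedding_eq, Fintype.card_coe] at h
    rw [← Nat.factorial_mul_descFactorial (card_le_univ S), mul_comm] at h
    exact (Nat.eq_of_mul_eq_mul_left (Nat.descFactorial_pos.2 (card_le_univ S)) h).symm
  have hB : #{y : S ↪ α | ∀ i, y i ∈ B} = (#B).descFactorial #S := by
    rw [← Fintype.card_subtype]
    exact (Fintype.card_congr (Equiv.codRestrict S (B : Set α))).trans (by simp)
  rw [← hB, ← hfix, ← card_smul_embedding_mem]
  simp [x]

end Equiv.Perm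

theorem List.card_filter_get_eq_countP {β : Type*} (l : List β) (p : β → Prop)
    [DecidablePred p] :
    #{i : Fin l.length | p (l.get i)} = l.countP (fun x => decide (p x)) := by
  rw [card_filter]
  simp only [List.get_eq_getElem]
  rw [Fin.sum_univ_fun_getElem l (fun x => if p x then 1 else 0)]
  induction l with
  | nil => rfl
  | cons b l ih => by_cases h : p b <;> simp [h, ih, add_comm]

theorem Finset.sum_countP_eq_mul_countP {ι β : Type*} (s : Finset ι) (l : List β)
    (p : ι → β → Prop) [∀ i v, Decidable (p i v)] (q : β → Prop) [DecidablePred q] (c : ℕ)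
    (h : ∀ v ∈ l, #{i ∈ s | p i v} = if q v then c else 0) :
    ∑ i ∈ s, l.countP (fun v => decide (p i v)) = c * l.countP (fun v => decide (q v)) := by
  induction l with
  | nil => simp
  | cons b l ih =>
    simp only [List.countP_cons, sum_add_distrib, ih fun v hv => h v (List.mem_cons_of_mem b hv),
      decide_eq_true_eq, ← card_filter, h b List.mem_cons_self]
    split_ifs <;> ring

theorem Fin.card_filter_val_add_one_mem {n : ℕ} {A : Finset ℕ} (hA : A ⊆ Icc 1 n) :
    #{j : Fin n | (j : ℕ) + 1 ∈ A} = #A := by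
  refine card_nbij (fun j => (j : ℕ) + 1) (fun j hj => (mem_filter.1 hj).2)
    (fun i _ j _ h => Fin.ext (by simpa using h)) fun x hx => ?_
  have hx' := mem_Icc.1 (hA hx)
  exact ⟨⟨x - 1, by omega⟩, by simpa [Nat.sub_add_cancel hx'.1] using mem_coe.1 hx,
    by simp; omega⟩

theorem descFactorial_mul_factorial_mul_div_factorial_le {a m n k : ℕ} (hm : 1 ≤ m)
    (hk : m * k ≤ n) :
    ((a.descFactorial m * (n - m)! * k : ℕ) : ℝ) / n ! ≤ a.choose m / (n - 1).choose (m - 1) := by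
  rcases k.eq_zero_or_pos with rfl | hk0
  · simp only [mul_zero, CharP.cast_eq_zero, zero_div]
    positivity
  have hmn : m ≤ n := (Nat.le_mul_of_pos_right m hk0).trans hk
  have hn : (0 : ℝ) < n := by exact_mod_cast (by omega : 0 < n)
  have hpos : (0 : ℝ) < (n - 1).choose (m - 1) := by exact_mod_cast Nat.choose_pos (by omega)
  have hpascal : n * (n - 1).choose (m - 1) = n.choose m * m := by
    have := Nat.add_one_mul_choose_eq (n - 1) (m - 1)
    rwa [Nat.sub_add_cancel (by omega), Nat.sub_add_cancel hm] at this
  have hcross : a.descFactorial m * (n - m)! * k * (n * (n - 1).choose (m - 1)) =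
      m * k * a.choose m * n ! := by
    rw [hpascal, Nat.descFactorial_eq_factorial_mul_choose,
      ← Nat.choose_mul_factorial_mul_factorial hmn]
    ring
  calc ((a.descFactorial m * (n - m)! * k : ℕ) : ℝ) / n !
      = (m * k / n : ℝ) * (a.choose m / (n - 1).choose (m - 1)) := by
        rw [_root_.div_mul_div_comm, div_eq_div_iff (by positivity) (by positivity)]
        exact_mod_cast hcross
    _ ≤ 1 * (a.choose m / (n - 1).choose (m - 1)) := by
        gcongr
        rw [div_le_one hn]
        exact_mod_cast hk
    _ = a.choose m / (n - 1).choose (m - 1) := one_mul _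

namespace RBT

theorem numLeaves_pos : ∀ t : RBT, 0 < t.numLeaves
  | leaf => Nat.one_pos
  | node l _ => Nat.add_pos_left l.numLeaves_pos _

theorem descLeaves_nil (t : RBT) : t.descLeaves [] = t.leafPaths := by
  simp [descLeaves, List.isPrefixOf]

theorem descLeaves_node_false_cons (l r : RBT) (p : List Bool) :
    (node l r).descLeaves (false :: p) = (l.descLeaves p).map (false :: ·) := by
  simp [descLeaves, leafPaths, List.filter_map, Function.comp_def, List.isPrefixOf]

theorem descLeaves_node_true_cons (l r : RBT) (p : List Bool) :
    (node l r).descLeaves (true :: p) = (r.descLeaves p).map (true :: ·) := by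
  simp [descLeaves, leafPaths, List.filter_map, Function.comp_def, List.isPrefixOf]

def subtreeSizes (t : RBT) : List ℕ :=
  t.vertexPaths.map fun v => (t.descLeaves v).length

theorem subtreeSizes_leaf : leaf.subtreeSizes = [1] := rfl

theorem subtreeSizes_node (l r : RBT) :
    (node l r).subtreeSizes =
      (l.numLeaves + r.numLeaves) :: (l.subtreeSizes ++ r.subtreeSizes) := by
  simp [subtreeSizes, vertexPaths, descLeaves_nil, descLeaves_node_false_cons,
    descLeaves_node_true_cons, length_leafPaths, numLeaves, Function.comp_def]

theorem count_subtreeSizes (t : RBT) (m : ℕ) :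
    t.subtreeSizes.count m = t.vertexPaths.countP fun v => (t.descLeaves v).length = m := by
  simp [subtreeSizes, List.count, List.countP_map, Function.comp_def, beq_eq_decide]

theorem le_numLeaves_of_mem_subtreeSizes {t : RBT} {s : ℕ} (hs : s ∈ t.subtreeSizes) :
    s ≤ t.numLeaves := by
  obtain ⟨v, -, rfl⟩ := List.mem_map.1 hs
  exact (List.length_filter_le _ _).trans t.length_leafPaths.le

theorem mul_count_subtreeSizes_le (m : ℕ) : ∀ t : RBT, m * t.subtreeSizes.count m ≤ t.numLeaves
  | leaf => by
    simp only [subtreeSizes_leaf, List.count_singleton', numLeaves]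
    split_ifs <;> omega
  | node l r => by
    rw [subtreeSizes_node, List.count_cons, List.count_append, numLeaves]
    by_cases hm : l.numLeaves + r.numLeaves = m
    · have hl : l.subtreeSizes.count m = 0 := List.count_eq_zero.2 fun h =>
        (le_numLeaves_of_mem_subtreeSizes h).not_gt (by have := r.numLeaves_pos; omega)
      have hr : r.subtreeSizes.count m = 0 := List.count_eq_zero.2 fun h =>
        (le_numLeaves_of_mem_subtreeSizes h).not_gt (by have := l.numLeaves_pos; omega)
      simp [hl, hr, hm]
    · have := mul_count_subtreeSizes_le m l
      have := mul_count_subtreeSizes_le m r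
      simp only [beq_iff_eq, hm, if_false, add_zero, Nat.mul_add]
      omega

theorem card_filter_get_mem_descLeaves (t : RBT) (v : List Bool) :
    #{i : Fin t.leafPaths.length | t.leafPaths.get i ∈ t.descLeaves v} =
      (t.descLeaves v).length := by
  rw [List.card_filter_get_eq_countP _ (· ∈ t.descLeaves v), List.countP_eq_length_filter,
    descLeaves]
  congr 1
  exact List.filter_congr fun x hx => by simp [hx, -List.isPrefixOf_iff_prefix]

end RBT

/-- Leaf positions of a tree with `N` leaves are indexed by `Fin T.leafPaths.length`
(a set of size `N`), and a uniformly random labeling assigns to the leaf at index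
`i` the label `(σ i : ℕ) + 1 ∈ {1, …, N}`, where `σ` is a uniformly random
permutation.  For any `A ⊆ {1, …, N}` of size `a` and any `m ≥ 1`, the expected
number of vertices of `T` whose descendant leaves number exactly `m` and all
receive labels in `A` is at most `choose(a, m) / choose(N-1, m-1)`. -/
theorem expected_monochromatic_vertices (T : RBT) (N : ℕ) (hN : T.numLeaves = N)
    (A : Finset ℕ) (hA : A ⊆ Finset.Icc 1 N) (a : ℕ) (ha : A.card = a)
    (m : ℕ) (hm : 1 ≤ m) :
    (∑ σ : Equiv.Perm (Fin T.leafPaths.length),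
        ((T.vertexPaths.countP (fun v =>
          decide ((T.descLeaves v).length = m ∧
            ∀ i : Fin T.leafPaths.length,
              T.leafPaths.get i ∈ T.descLeaves v → ((σ i : ℕ) + 1) ∈ A))) : ℝ)) /
        (Fintype.card (Equiv.Perm (Fin T.leafPaths.length)) : ℝ) ≤
      (a.choose m : ℝ) / ((N - 1).choose (m - 1) : ℝ) := by
  set n := T.leafPaths.length
  have hn : n = N := T.length_leafPaths.trans hN
  set B : Finset (Fin n) := {j | (j : ℕ) + 1 ∈ A}
  have hB : #B = a := ha ▸ Fin.card_filter_val_add_one_mem (hn ▸ hA)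
  have hvertex : ∀ v ∈ T.vertexPaths, #{σ : Equiv.Perm (Fin n) | (T.descLeaves v).length = m ∧
      ∀ i : Fin n, T.leafPaths.get i ∈ T.descLeaves v → (σ i : ℕ) + 1 ∈ A} =
      if (T.descLeaves v).length = m then a.descFactorial m * (n - m)! else 0 := by
    intro v _
    split_ifs with hv
    · set S : Finset (Fin n) := {i | T.leafPaths.get i ∈ T.descLeaves v}
      have hS : #S = m := (T.card_filter_get_mem_descLeaves v).trans hv
      calc _ = #{σ : Equiv.Perm (Fin n) | ∀ i ∈ S, σ i ∈ B} := by simp [hv, S, B]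
        _ = _ := by
          convert Equiv.Perm.card_mapsTo S B using 3 <;> simp only [hB, hS, Fintype.card_fin]
    · simp [hv]
  have hk : m * T.subtreeSizes.count m ≤ n := hn ▸ hN ▸ T.mul_count_subtreeSizes_le m
  rw [← Nat.cast_sum, Finset.sum_countP_eq_mul_countP _ _ _ _ _ hvertex, Fintype.card_perm,
    Fintype.card_fin, ← hn, ← T.count_subtreeSizes]
  exact descFactorial_mul_factorial_mul_div_factorial_le hm hk
end
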